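/- arXiv:0810.5423 — 2 statements merged into one kernel-verified Lean document; each statement's English description precedes it below -/
import Mathlib

section
/- For every real number q with |q| < 1 and every natural number k, the series Σ_{γ=0}^{∞} q^γ γ^k converges and Σ_{γ=0}^{∞} q^γ γ^k = (1/(1−q)) · Σ_{i=0}^{k} (q/(1−q))^i Δ^i 0^k. -/
/-!
Newton's forward difference formula for `x ↦ x ^ k` gives
`γ ^ k = ∑_{i ≤ k} C(γ, i) Δ^i 0^k`, the terms with `i > k` vanishing because `x ↦ x ^ k` is a
polynomial of degree `k`. Summing against `q ^ γ` and using the negative binomial series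
`∑_γ C(γ, i) q ^ γ = q ^ i / (1 - q) ^ (i + 1)` gives the result term by term.
-/

/-- The `i`-th forward finite difference of the function `γ ↦ γ^k` evaluated at the
point `a`, i.e. `Δ^i a^k = ∑_{j=0}^{i} (-1)^(i-j) C(i,j) (a+j)^k` (with `0^0 = 1`). -/
noncomputable def finDiff (i k : ℕ) (a : ℝ) : ℝ :=
  ∑ j ∈ Finset.range (i + 1), (-1 : ℝ) ^ (i - j) * (i.choose j : ℝ) * (a + (j : ℝ)) ^ k

open Finset

theorem hasSum_choose_mul_pow_of_norm_lt_one {𝕜 : Type*} [NormedDivisionRing 𝕜] (k : ℕ) {r : 𝕜}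
    (hr : ‖r‖ < 1) : HasSum (fun n ↦ (n.choose k : 𝕜) * r ^ n) (r ^ k / (1 - r) ^ (k + 1)) := by
  rw [← (add_left_injective k).hasSum_iff fun n hn ↦ ?_, ← mul_one_div]
  · have shifted : (fun n ↦ (n.choose k : 𝕜) * r ^ n) ∘ (· + k) =
        fun n ↦ r ^ k * ((n + k).choose k * r ^ n) := by
      funext n
      rw [Function.comp_apply, pow_add, ← mul_assoc]
      exact ((Nat.cast_commute _ _).mul_left (Commute.pow_pow_self r n k)).eq
    rw [shifted]
    exact (hasSum_choose_mul_geometric_of_norm_lt_one k hr).mul_left (r ^ k)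
  · have hnk : n < k := by by_contra h; exact hn ⟨n - k, Nat.sub_add_cancel (not_lt.mp h)⟩
    rw [Nat.choose_eq_zero_of_lt hnk, Nat.cast_zero, zero_mul]

theorem finDiff_eq_fwdDiff_iter (i k : ℕ) (a : ℝ) :
    finDiff i k a = (fwdDiff 1)^[i] (fun x : ℝ ↦ x ^ k) a := by
  simp [finDiff, fwdDiff_iter_eq_sum_shift, zsmul_eq_mul, mul_comm]

theorem finDiff_eq_zero_of_lt {i k : ℕ} (h : k < i) (a : ℝ) : finDiff i k a = 0 := by
  rw [finDiff_eq_fwdDiff_iter, fwdDiff_iter_pow_eq_zero_of_lt h, Pi.zero_apply]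

theorem natCast_pow_eq_sum_choose_mul_finDiff (n k : ℕ) :
    (n : ℝ) ^ k = ∑ i ∈ range (k + 1), (n.choose i : ℝ) * finDiff i k 0 := by
  have newton := shift_eq_sum_fwdDiff_iter (1 : ℝ) (fun x ↦ x ^ k) n 0
  simp only [zero_add, nsmul_eq_mul, mul_one, ← finDiff_eq_fwdDiff_iter] at newton
  -- both sums are truncations of the same finitely supported sum
  have extend (m : ℕ) (hm : m ≤ n + k + 1)
      (vanish : ∀ i, m ≤ i → (n.choose i : ℝ) * finDiff i k 0 = 0) :
      ∑ i ∈ range m, (n.choose i : ℝ) * finDiff i k 0 =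
        ∑ i ∈ range (n + k + 1), (n.choose i : ℝ) * finDiff i k 0 :=
    sum_subset (range_mono hm) fun i _ hi ↦ vanish i (by simpa using hi)
  rw [newton, extend (n + 1) (by omega), extend (k + 1) (by omega)]
  · intro i hi
    rw [finDiff_eq_zero_of_lt (by omega), mul_zero]
  · intro i hi
    rw [Nat.choose_eq_zero_of_lt (by omega), Nat.cast_zero, zero_mul]

/-- For every real `q` with `|q| < 1` and every natural `k`, the series
`∑_{γ=0}^{∞} q^γ γ^k` converges and equals
`(1/(1-q)) ∑_{i=0}^{k} (q/(1-q))^i Δ^i 0^k`. -/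
theorem hasSum_geom_mul_pow (q : ℝ) (hq : |q| < 1) (k : ℕ) :
    HasSum (fun γ : ℕ => q ^ γ * (γ : ℝ) ^ k)
      ((1 / (1 - q)) * ∑ i ∈ Finset.range (k + 1), (q / (1 - q)) ^ i * finDiff i k 0) := by
  have hq1 : 1 - q ≠ 0 := by linarith [(abs_lt.mp hq).2]
  have series : (fun γ : ℕ ↦ q ^ γ * (γ : ℝ) ^ k) =
      fun γ ↦ ∑ i ∈ range (k + 1), finDiff i k 0 * ((γ.choose i : ℝ) * q ^ γ) := by
    funext γ
    rw [natCast_pow_eq_sum_choose_mul_finDiff, mul_sum]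
    exact sum_congr rfl fun i _ ↦ by ring
  have value : 1 / (1 - q) * ∑ i ∈ range (k + 1), (q / (1 - q)) ^ i * finDiff i k 0 =
      ∑ i ∈ range (k + 1), finDiff i k 0 * (q ^ i / (1 - q) ^ (i + 1)) := by
    rw [mul_sum]
    exact sum_congr rfl fun i _ ↦ by rw [div_pow, pow_succ]; field_simp
  rw [series, value]
  exact hasSum_sum fun i _ ↦
    (hasSum_choose_mul_pow_of_norm_lt_one i (by rwa [Real.norm_eq_abs])).mul_left (finDiff i k 0)
end

section
/- For every integer β, the series Σ_{γ∈ℤ} D_2(γ) e^{−h(β−γ)} converges absolutely and equals 0; i.e., the discrete convolution of D_2 with the discrete function β ↦ e^{−hβ} is identically zero. -/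
/-!
Write `E = e^h`. Since `e^{-h(β-γ)} = e^{-hβ} E^γ`, it suffices that the symbol
`∑_γ D_2(γ) E^γ` vanishes. Outside the window `|γ| ≤ 1`, `D_2(γ) = (A/(pλ)) λ^{|γ|}`, and the
two-sided geometric series `∑_γ λ^{|γ|} E^γ` converges because `|λ| E < 1` and `|λ| < E`.
The resulting closed form vanishes because `P_2(x) = p x² + p₁ x + p` is palindromic, so that
`p₁ = -p(1 + λ²)/λ` at its root `λ`, and because `(1 - λE)(E - λ) = -(λ(E² + 1) - E(λ² + 1))`.
-/

/-- The polynomial `P_2(λ) = (1-e^{2h})(1-λ)² - 2h(λ(e^{2h}+1) - e^h(λ²+1))`. -/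
noncomputable def P2 (h x : ℝ) : ℝ :=
  (1 - Real.exp (2 * h)) * (1 - x) ^ 2 -
    2 * h * (x * (Real.exp (2 * h) + 1) - Real.exp h * (x ^ 2 + 1))

section TwoSidedGeometric

variable {K : Type*} [NormedField K] {q z : K}

theorem hasSum_pow_natAbs_mul_zpow (hqz : ‖q * z‖ < 1) (hq : ‖q‖ < ‖z‖) :
    HasSum (fun n : ℤ => q ^ n.natAbs * z ^ n) ((1 - q * z)⁻¹ + q * (z - q)⁻¹) := by
  have hz : z ≠ 0 := norm_pos_iff.mp ((norm_nonneg q).trans_lt hq)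
  have hqz' : ‖q / z‖ < 1 := by rwa [norm_div, div_lt_one (hq.trans_le' (norm_nonneg q))]
  refine HasSum.of_nat_of_neg_add_one ?_ ?_
  · simpa [mul_pow] using hasSum_geometric_of_norm_lt_one hqz
  · have hsum : q * (z - q)⁻¹ = q / z * (1 - q / z)⁻¹ := by field_simp
    rw [hsum]
    refine ((hasSum_geometric_of_norm_lt_one hqz').mul_left (q / z)).congr_fun fun n => ?_
    rw [zpow_neg, ← pow_succ', div_pow, div_eq_mul_inv]
    norm_cast

theorem hasSum_mul_zpow_of_eq_pow_natAbs {f : ℤ → K} {a c₀ c₁ : K} (h₀ : f 0 = a + c₀)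
    (h₁ : ∀ n : ℤ, n.natAbs = 1 → f n = a * q + c₁)
    (hf : ∀ n : ℤ, 2 ≤ n.natAbs → f n = a * q ^ n.natAbs)
    (hqz : ‖q * z‖ < 1) (hq : ‖q‖ < ‖z‖) :
    HasSum (fun n : ℤ => f n * z ^ n)
      (a * ((1 - q * z)⁻¹ + q * (z - q)⁻¹) + c₀ + c₁ * (z + z⁻¹)) := by
  have hwindow : HasSum (fun n : ℤ => f n * z ^ n - a * (q ^ n.natAbs * z ^ n))
      (c₀ + c₁ * (z + z⁻¹)) := by
    convert hasSum_sum_of_ne_finset_zero (s := {-1, 0, 1})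
      (L := SummationFilter.unconditional ℤ) fun n hn => ?_ using 1
    · rw [Finset.sum_insert (by decide), Finset.sum_pair (by decide), h₀, h₁ (-1) rfl, h₁ 1 rfl]
      simp only [Int.natAbs_neg, Int.natAbs_one, Int.natAbs_zero, zpow_neg, zpow_one, zpow_zero,
        pow_zero, pow_one]
      ring
    · rw [hf n (by simp only [Finset.mem_insert, Finset.mem_singleton, not_or] at hn; omega)]
      ring
  simpa [add_assoc] using ((hasSum_pow_natAbs_mul_zpow hqz hq).mul_left a).add hwindow

end TwoSidedGeometric

theorem P2_eq_quadratic {h p p1 : ℝ} (hp : p = (1 - Real.exp (2 * h)) + 2 * h * Real.exp h)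
    (hp1 : p1 = -2 * (1 - Real.exp (2 * h)) - 2 * h * (Real.exp (2 * h) + 1)) :
    P2 h = fun x => p * x ^ 2 + p1 * x + p := by
  funext x
  rw [P2, hp, hp1]
  ring

theorem deriv_P2 {h p p1 : ℝ} (hp : p = (1 - Real.exp (2 * h)) + 2 * h * Real.exp h)
    (hp1 : p1 = -2 * (1 - Real.exp (2 * h)) - 2 * h * (Real.exp (2 * h) + 1)) (x : ℝ) :
    deriv (P2 h) x = 2 * p * x + p1 := by
  rw [P2_eq_quadratic hp hp1]
  refine HasDerivAt.deriv ?_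
  convert (((hasDerivAt_pow 2 x).const_mul p).add ((hasDerivAt_id x).const_mul p1)).add_const p
    using 1
  norm_num
  ring

theorem D2_symbol_eq_zero {p p1 lam E A C : ℝ} (hp : p ≠ 0) (hlam : lam ≠ 0) (hE : E ≠ 0)
    (hroot : p * lam ^ 2 + p1 * lam + p = 0) (hder : 2 * p * lam + p1 ≠ 0)
    (hlamE : 1 - lam * E ≠ 0) (hElam : E - lam ≠ 0)
    (hA : A = 2 * (1 - lam) ^ 2 * (lam * (E ^ 2 + 1) - E * (lam ^ 2 + 1)) * p
        / (lam * (2 * p * lam + p1)))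
    (hC : C = 1 + 2 * E + E ^ 2 + E * p1 / p) :
    A / (p * lam) * ((1 - lam * E)⁻¹ + lam * (E - lam)⁻¹) + 2 * C / p
      + -2 * E / p * (E + E⁻¹) = 0 := by
  have hp1 : p1 = -(p * (1 + lam ^ 2)) / lam := by
    field_simp
    linear_combination hroot
  have hder' : lam * (2 * p * lam + p1) = -(p * (1 - lam ^ 2)) := by
    rw [hp1]
    field_simp
    ring
  have hlam2 : 1 - lam ^ 2 ≠ 0 := by
    rintro h
    apply hder
    simpa [h, hlam] using hder'
  have hQ : lam * (E ^ 2 + 1) - E * (lam ^ 2 + 1) = -((1 - lam * E) * (E - lam)) := by ring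
  rw [hder', hQ] at hA
  rw [hp1] at hC
  subst hA hC
  field_simp
  ring

theorem hasSum_D2_mul_zpow {D2 : ℤ → ℝ} {p lam A C E : ℝ} (hp : p ≠ 0) (hlam : lam ≠ 0)
    (hD : ∀ β : ℤ, D2 β =
      if β = 0 then (2 * C + A / lam) / p
      else if β.natAbs = 1 then (-2 * E + A) / p
      else A * lam ^ (β.natAbs - 1) / p)
    (hlamE : |lam * E| < 1) (hlamlt : |lam| < |E|) :
    HasSum (fun n : ℤ => D2 n * E ^ n)
      (A / (p * lam) * ((1 - lam * E)⁻¹ + lam * (E - lam)⁻¹) + 2 * C / p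
        + -2 * E / p * (E + E⁻¹)) := by
  refine hasSum_mul_zpow_of_eq_pow_natAbs ?_ (fun n hn => ?_) (fun n hn => ?_) hlamE hlamlt
  · rw [hD, if_pos rfl]
    field_simp
    ring
  · rw [hD, if_neg (by omega), if_pos hn]
    field_simp
    ring
  · have hpow : lam ^ n.natAbs = lam ^ (n.natAbs - 1) * lam := by
      rw [← pow_succ, Nat.sub_add_cancel (by omega)]
    rw [hD, if_neg (by omega), if_neg (by omega), hpow]
    field_simp

/-- For every integer `β`, the series `∑_{γ ∈ ℤ} D_2(γ) e^{-h(β-γ)}` converges and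
equals `0`: the discrete convolution of `D_2` with `β ↦ e^{-hβ}` is identically zero. -/
theorem D2_conv_exp_neg (h p p1 lam A C : ℝ) (D2 : ℤ → ℝ)
    (hh : 0 < h)
    (hp : p = (1 - Real.exp (2 * h)) + 2 * h * Real.exp h)
    (hp1 : p1 = -2 * (1 - Real.exp (2 * h)) - 2 * h * (Real.exp (2 * h) + 1))
    (hpne : p ≠ 0)
    (hroot : P2 h lam = 0)
    (hlam0 : 0 < |lam|) (hlam1 : |lam| < Real.exp (-h))
    (hder : deriv (P2 h) lam ≠ 0)
    (hA : A = 2 * (1 - lam) ^ 2 *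
        (lam * (Real.exp (2 * h) + 1) - Real.exp h * (lam ^ 2 + 1)) * p
        / (lam * deriv (P2 h) lam))
    (hC : C = 1 + 2 * Real.exp h + Real.exp (2 * h) + Real.exp h * p1 / p)
    (hD : ∀ β : ℤ, D2 β =
      if β = 0 then (2 * C + A / lam) / p
      else if β.natAbs = 1 then (-2 * Real.exp h + A) / p
      else A * lam ^ (β.natAbs - 1) / p)
    (β : ℤ) :
    HasSum (fun γ : ℤ => D2 γ * Real.exp (-(h * ((β : ℝ) - (γ : ℝ))))) 0 := by
  have hexp2 : Real.exp (2 * h) = Real.exp h ^ 2 := by rw [← Real.exp_nat_mul]; ring_nf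
  rw [congrFun (P2_eq_quadratic hp hp1)] at hroot
  rw [deriv_P2 hp hp1] at hder hA
  rw [hexp2] at hA hC
  set E := Real.exp h with hE
  have hlam : lam ≠ 0 := abs_pos.mp hlam0
  have hlamE : |lam * E| < 1 := by
    rw [abs_mul, abs_of_pos (Real.exp_pos h), ← lt_div_iff₀ (Real.exp_pos h), one_div,
      ← Real.exp_neg]
    exact hlam1
  have hlamlt : |lam| < E := hlam1.trans (Real.exp_lt_exp.mpr (by linarith))
  have hsymbol := hasSum_D2_mul_zpow hpne hlam hD hlamE (by rwa [abs_of_pos (Real.exp_pos h)])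
  rw [D2_symbol_eq_zero hpne hlam (Real.exp_pos h).ne' hroot hder
    (sub_ne_zero.mpr (abs_lt.mp hlamE).2.ne')
    (sub_ne_zero.mpr ((le_abs_self lam).trans_lt hlamlt).ne') hA hC] at hsymbol
  have hshift (γ : ℤ) : Real.exp (-(h * (β - γ))) = Real.exp (-(h * β)) * E ^ γ := by
    rw [hE, ← Real.rpow_intCast, ← Real.exp_mul, ← Real.exp_add]
    ring_nf
  rw [← mul_zero (Real.exp (-(h * β)))]
  exact (hsymbol.mul_left _).congr_fun fun γ => by rw [hshift]; ring
end
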